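/- For every complex matrix σ indexed by (Fin d × Fin d) × (Fin d × Fin d) (an operator on ℂ^d ⊗ ℂ^d), the trace norm of the realignment is bounded by the greatest cross norm: τ(𝔄(σ)) ≤ ‖σ‖_γ. -/

import Mathlib

open scoped Matrix Kronecker BigOperators ComplexOrder
open MeasureTheory

/-- Trace norm of a complex square matrix: `tr √(AᴴA)` (the sum of singular values). -/
noncomputable def traceNorm {n : Type*} [Fintype n] [DecidableEq n] (A : Matrix n n ℂ) : ℝ :=
  (((Matrix.posSemidef_conjTranspose_mul_self A).1.eigenvectorUnitary.1 *
      Matrix.diagonal (((↑) : ℝ → ℂ) ∘ (Real.sqrt ·) ∘ (Matrix.posSemidef_conjTranspose_mul_self A).1.eigenvalues) *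
      (star (Matrix.posSemidef_conjTranspose_mul_self A).1.eigenvectorUnitary : Matrix n n ℂ)).trace).re

/-- The greatest cross norm `‖·‖_γ` of an operator on `ℂ^{d₁} ⊗ ℂ^{d₂}`: the infimum of
`Σᵢ ‖uᵢ‖₁ ‖vᵢ‖₁` over all finite decompositions `T = Σᵢ uᵢ ⊗ vᵢ` into Kronecker products. -/
noncomputable def gcn {d₁ d₂ : ℕ} (T : Matrix (Fin d₁ × Fin d₂) (Fin d₁ × Fin d₂) ℂ) : ℝ :=
  sInf { r : ℝ | ∃ (n : ℕ) (u : Fin n → Matrix (Fin d₁) (Fin d₁) ℂ)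
      (v : Fin n → Matrix (Fin d₂) (Fin d₂) ℂ),
      T = ∑ i, u i ⊗ₖ v i ∧ r = ∑ i, traceNorm (u i) * traceNorm (v i) }

/-- A density matrix: positive semidefinite with trace one. -/
def IsDensityMatrix {n : Type*} [Fintype n] (ρ : Matrix n n ℂ) : Prop :=
  ρ.PosSemidef ∧ ρ.trace = 1

/-- Separability of a state on `ℂ^{d₁} ⊗ ℂ^{d₂}`: a finite convex-type combination
`ρ = Σᵢ ωᵢ ρᵢ⁽¹⁾ ⊗ ρᵢ⁽²⁾` of Kronecker products of density matrices, with `ωᵢ ≥ 0`. -/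
def IsSeparable' {d₁ d₂ : ℕ} (ρ : Matrix (Fin d₁ × Fin d₂) (Fin d₁ × Fin d₂) ℂ) : Prop :=
  ∃ (n : ℕ) (ω : Fin n → ℝ) (ρ₁ : Fin n → Matrix (Fin d₁) (Fin d₁) ℂ)
    (ρ₂ : Fin n → Matrix (Fin d₂) (Fin d₂) ℂ),
    (∀ i, 0 ≤ ω i) ∧ (∀ i, IsDensityMatrix (ρ₁ i)) ∧ (∀ i, IsDensityMatrix (ρ₂ i)) ∧
    ρ = ∑ i, (ω i : ℂ) • (ρ₁ i ⊗ₖ ρ₂ i)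

/-- The realignment map `𝔄`: `𝔄(ρ)_{(i,j),(k,l)} = ρ_{(i,k),(j,l)}`. -/
def realign {d : ℕ} (ρ : Matrix (Fin d × Fin d) (Fin d × Fin d) ℂ) :
    Matrix (Fin d × Fin d) (Fin d × Fin d) ℂ :=
  Matrix.of fun p q => ρ (p.1, q.1) (p.2, q.2)

/-- `τ(𝔄(ρ))`: the trace norm of the realignment of `ρ`. -/
noncomputable def tauRealign {d : ℕ} (ρ : Matrix (Fin d × Fin d) (Fin d × Fin d) ℂ) : ℝ :=
  traceNorm (realign ρ)

/-- The flip operator `𝔽 = Σ_{i,j} |i⊗j⟩⟨j⊗i|` on `ℂ^d ⊗ ℂ^d`. -/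
def flipOp (d : ℕ) : Matrix (Fin d × Fin d) (Fin d × Fin d) ℂ :=
  Matrix.of fun p q => if p.1 = q.2 ∧ p.2 = q.1 then 1 else 0

/-- The Werner state `ρ_f = (1/(d³−d))((d−f) I + (df−1) 𝔽)` on `ℂ^d ⊗ ℂ^d`. -/
noncomputable def wernerState (d : ℕ) (f : ℝ) : Matrix (Fin d × Fin d) (Fin d × Fin d) ℂ :=
  (((d : ℂ) ^ 3 - d)⁻¹) • (((d : ℂ) - (f : ℂ)) • (1 : Matrix (Fin d × Fin d) (Fin d × Fin d) ℂ)
    + ((d : ℂ) * (f : ℂ) - 1) • flipOp d)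

/-- The maximally entangled vector `|Ψ⁺⟩ = (1/√d) Σᵢ |i⊗i⟩` on `ℂ^d ⊗ ℂ^d`. -/
noncomputable def psiPlus (d : ℕ) : Fin d × Fin d → ℂ :=
  fun p => if p.1 = p.2 then ((1 / Real.sqrt d : ℝ) : ℂ) else 0

/-- The isotropic state `ρ_F = ((1−F)/(d²−1))(I − |Ψ⁺⟩⟨Ψ⁺|) + F |Ψ⁺⟩⟨Ψ⁺|` on `ℂ^d ⊗ ℂ^d`. -/
noncomputable def isotropicState (d : ℕ) (F : ℝ) : Matrix (Fin d × Fin d) (Fin d × Fin d) ℂ :=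
  (((1 - F : ℝ) : ℂ) / ((d : ℂ) ^ 2 - 1)) •
      ((1 : Matrix (Fin d × Fin d) (Fin d × Fin d) ℂ)
        - Matrix.vecMulVec (psiPlus d) (star (psiPlus d)))
    + ((F : ℝ) : ℂ) • Matrix.vecMulVec (psiPlus d) (star (psiPlus d))


section AuxTraceNormProof
open Matrix

private lemma aux_trace_unitary_conj {n : Type*} [Fintype n] [DecidableEq n]
    (U : Matrix.unitaryGroup n ℂ) (D : Matrix n n ℂ) :
    ((U : Matrix n n ℂ) * D * (star U : Matrix n n ℂ)).trace = D.trace := by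
  rw [Matrix.trace_mul_comm, ← Matrix.mul_assoc, (Matrix.mem_unitaryGroup_iff').mp U.2,
    Matrix.one_mul]

private lemma aux_traceNorm_eq_sum {n : Type*} [Fintype n] [DecidableEq n] (A : Matrix n n ℂ) :
    traceNorm A =
      ∑ i, Real.sqrt ((Matrix.posSemidef_conjTranspose_mul_self A).1.eigenvalues i) := by
  unfold traceNorm
  rw [aux_trace_unitary_conj, Matrix.trace_diagonal]
  simp

private lemma aux_traceNorm_nonneg {n : Type*} [Fintype n] [DecidableEq n] (A : Matrix n n ℂ) :
    0 ≤ traceNorm A := by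
  rw [aux_traceNorm_eq_sum]
  exact Finset.sum_nonneg fun i _ => Real.sqrt_nonneg _

private lemma aux_re_star_dot {n : Type*} [Fintype n] (z : n → ℂ) :
    (dotProduct (star z) z).re = ∑ i, ‖z i‖^2 := by
  simp only [dotProduct, Pi.star_apply, Complex.re_sum]
  refine Finset.sum_congr rfl fun i _ => ?_
  simp [Complex.mul_re, Complex.sq_norm, Complex.normSq_apply]

private lemma aux_norm_dot_le {n : Type*} [Fintype n] (a b : n → ℂ) :
    ‖dotProduct a b‖ ≤ Real.sqrt (∑ i, ‖a i‖^2) * Real.sqrt (∑ i, ‖b i‖^2) := by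
  calc ‖dotProduct a b‖ ≤ ∑ i, ‖a i‖ * ‖b i‖ := by
        refine (norm_sum_le _ _).trans ?_
        exact Finset.sum_le_sum fun i _ => (norm_mul _ _).le
    _ ≤ _ := by
        have := Real.sqrt_le_sqrt (Finset.sum_mul_sq_le_sq_mul_sq Finset.univ
          (fun i => ‖a i‖) (fun i => ‖b i‖))
        rw [Real.sqrt_sq (by positivity), Real.sqrt_mul (by positivity)] at this
        exact this

private lemma aux_mul_vecMulVec {n : Type*} [Fintype n] (A : Matrix n n ℂ) (x y : n → ℂ) :
    A * vecMulVec x y = vecMulVec (A *ᵥ x) y := by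
  ext i j
  simp [mul_apply, vecMulVec_apply, mulVec, dotProduct, Finset.sum_mul, mul_assoc]

private lemma aux_vecMulVec_mul {n : Type*} [Fintype n] (x y : n → ℂ) (B : Matrix n n ℂ) :
    vecMulVec x y * B = vecMulVec x (y ᵥ* B) := by
  ext i j
  simp [mul_apply, vecMulVec_apply, vecMul, dotProduct, Finset.mul_sum, mul_assoc]

private lemma aux_trace_vecMulVec {n : Type*} [Fintype n] (x y : n → ℂ) :
    (vecMulVec x y).trace = dotProduct x y := by
  simp [Matrix.trace, Matrix.diag, vecMulVec_apply, dotProduct]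

private lemma aux_trace_mul_vecMulVec_mul {n : Type*} [Fintype n] (A : Matrix n n ℂ)
    (x y : n → ℂ) (B : Matrix n n ℂ) :
    (A * vecMulVec x y * B).trace = dotProduct (A *ᵥ x) (y ᵥ* B) := by
  rw [aux_mul_vecMulVec, aux_vecMulVec_mul, aux_trace_vecMulVec]

private lemma aux_traceNorm_sum_vecMulVec_le {n : Type*} [Fintype n] [DecidableEq n] {m : ℕ}
    (x y : Fin m → (n → ℂ)) :
    traceNorm (∑ j, vecMulVec (x j) (y j)) ≤
      ∑ j, Real.sqrt (∑ i, ‖x j i‖^2) * Real.sqrt (∑ i, ‖y j i‖^2) := by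
  set M : Matrix n n ℂ := ∑ j, vecMulVec (x j) (y j) with hMdef
  have h := Matrix.posSemidef_conjTranspose_mul_self M
  set lam : n → ℝ := h.1.eigenvalues with hlamdef
  set V : Matrix n n ℂ := (h.1.eigenvectorUnitary : Matrix n n ℂ) with hVdef
  have hVV : V * Vᴴ = 1 := by
    rw [← Matrix.star_eq_conjTranspose]
    exact (Matrix.mem_unitaryGroup_iff).mp h.1.eigenvectorUnitary.2
  have hlam_nonneg : ∀ i, 0 ≤ lam i := h.eigenvalues_nonneg
  have hNN : (M * V)ᴴ * (M * V) = Matrix.diagonal (fun i => (lam i : ℂ)) := by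
    rw [Matrix.conjTranspose_mul]
    calc Vᴴ * Mᴴ * (M * V) = Vᴴ * (Mᴴ * M) * V := by
          rw [Matrix.mul_assoc, Matrix.mul_assoc, Matrix.mul_assoc]
      _ = Matrix.diagonal (fun i => (lam i : ℂ)) := by
          rw [← Matrix.star_eq_conjTranspose]
          have h5 := h.1.conjStarAlgAut_star_eigenvectorUnitary
          rw [Unitary.conjStarAlgAut_apply, Unitary.coe_star, star_star] at h5
          exact h5
  set g : n → ℂ := fun i => if lam i = 0 then 0 else (((Real.sqrt (lam i) : ℝ) : ℂ))⁻¹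
    with hgdef
  set U : Matrix n n ℂ := M * V * Matrix.diagonal g with hUdef
  have hsg : ∀ i, star (g i) * (lam i : ℂ) = ((Real.sqrt (lam i) : ℝ) : ℂ) := by
    intro i
    by_cases hi : lam i = 0
    · simp [hgdef, hi]
    · have h1 : Real.sqrt (lam i) ≠ 0 := by
        simpa using Real.sqrt_ne_zero'.mpr (lt_of_le_of_ne (hlam_nonneg i) (Ne.symm hi))
      have h2 : (lam i : ℂ) = ((Real.sqrt (lam i) : ℝ) : ℂ) * ((Real.sqrt (lam i) : ℝ) : ℂ) := by
        rw [← Complex.ofReal_mul, Real.mul_self_sqrt (hlam_nonneg i)]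
      simp only [hgdef, if_neg hi, h2]
      rw [star_inv₀]
      rw [show star (((Real.sqrt (lam i) : ℝ) : ℂ)) = ((Real.sqrt (lam i) : ℝ) : ℂ) by
        exact Complex.conj_ofReal _]
      field_simp
  have hUN : Uᴴ * (M * V) = Matrix.diagonal (fun i => ((Real.sqrt (lam i) : ℝ) : ℂ)) := by
    rw [hUdef, Matrix.conjTranspose_mul, Matrix.mul_assoc, hNN, Matrix.diagonal_conjTranspose]
    rw [Matrix.diagonal_mul_diagonal]
    ext i j
    rcases eq_or_ne i j with rfl | hij
    · simpa [Matrix.diagonal_apply_eq] using hsg i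
    · simp [Matrix.diagonal_apply_ne _ hij]
  have key : traceNorm M = ((Uᴴ * (M * V)).trace).re := by
    rw [aux_traceNorm_eq_sum, hUN, Matrix.trace_diagonal]
    simp
    rfl
  set e : n → ℂ := fun i => if lam i = 0 then 0 else 1 with hedef
  have hUU : Uᴴ * U = Matrix.diagonal e := by
    rw [show Uᴴ * U = Uᴴ * (M * V) * Matrix.diagonal g from (Matrix.mul_assoc _ _ _).symm,
      hUN, Matrix.diagonal_mul_diagonal]
    refine congrArg Matrix.diagonal (funext fun i => ?_)
    by_cases hi : lam i = 0
    · simp [hgdef, hedef, hi]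
    · have h1 : Real.sqrt (lam i) ≠ 0 := by
        simpa using Real.sqrt_ne_zero'.mpr (lt_of_le_of_ne (hlam_nonneg i) (Ne.symm hi))
      have h1' : (((Real.sqrt (lam i) : ℝ)) : ℂ) ≠ 0 := by exact_mod_cast h1
      simp [hgdef, hedef, hi, mul_inv_cancel₀ h1']
  have hUe : U * Matrix.diagonal e = U := by
    rw [hUdef, Matrix.mul_assoc, Matrix.diagonal_mul_diagonal]
    congr 1
    refine congrArg Matrix.diagonal (funext fun i => ?_)
    by_cases hi : lam i = 0 <;> simp [hgdef, hedef, hi]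
  have hproj : (U * Uᴴ) * (U * Uᴴ) = U * Uᴴ := by
    calc (U * Uᴴ) * (U * Uᴴ) = U * (Uᴴ * U) * Uᴴ := by simp only [Matrix.mul_assoc]
      _ = U * Uᴴ := by rw [hUU, hUe]
  have hQH : (1 - U * Uᴴ)ᴴ = 1 - U * Uᴴ := by
    simp [Matrix.conjTranspose_sub, Matrix.conjTranspose_mul]
  have hQsq : (1 - U * Uᴴ) * (1 - U * Uᴴ) = 1 - U * Uᴴ := by
    rw [Matrix.mul_sub, Matrix.sub_mul, Matrix.sub_mul, hproj]
    simp
  have hQ : Matrix.PosSemidef (1 - U * Uᴴ) := by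
    have h2 := Matrix.posSemidef_conjTranspose_mul_self (1 - U * Uᴴ)
    rwa [hQH, hQsq] at h2
  have hUx : ∀ x0 : n → ℂ, ∑ i, ‖(Uᴴ *ᵥ x0) i‖^2 ≤ ∑ i, ‖x0 i‖^2 := by
    intro x0
    have h0 := hQ.dotProduct_mulVec_nonneg x0
    have h0re : (0:ℝ) ≤ (dotProduct (star x0) ((1 - U * Uᴴ) *ᵥ x0)).re :=
      (Complex.le_def.mp h0).1
    have hexp : dotProduct (star x0) ((1 - U * Uᴴ) *ᵥ x0)
        = dotProduct (star x0) x0 - dotProduct (star x0) ((U * Uᴴ) *ᵥ x0) := by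
      rw [Matrix.sub_mulVec, dotProduct_sub, Matrix.one_mulVec]
    have heq : dotProduct (star x0) ((U * Uᴴ) *ᵥ x0)
        = dotProduct (star (Uᴴ *ᵥ x0)) (Uᴴ *ᵥ x0) := by
      rw [Matrix.star_mulVec, Matrix.conjTranspose_conjTranspose,
        Matrix.dotProduct_mulVec (star x0 ᵥ* U), Matrix.vecMul_vecMul,
        ← Matrix.dotProduct_mulVec]
    rw [hexp, heq] at h0re
    have := aux_re_star_dot (Uᴴ *ᵥ x0)
    have h3 := aux_re_star_dot x0
    rw [Complex.sub_re] at h0re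
    linarith
  have hVy : ∀ y0 : n → ℂ, ∑ i, ‖(y0 ᵥ* V) i‖^2 = ∑ i, ‖y0 i‖^2 := by
    intro y0
    have : dotProduct (star (y0 ᵥ* V)) (y0 ᵥ* V) = dotProduct (star y0) y0 := by
      rw [Matrix.star_vecMul, dotProduct_comm, Matrix.dotProduct_mulVec,
        Matrix.vecMul_vecMul, hVV, Matrix.vecMul_one, dotProduct_comm]
    rw [← aux_re_star_dot, ← aux_re_star_dot, this]
  have hMsplit : Uᴴ * (M * V) = ∑ j, Uᴴ * vecMulVec (x j) (y j) * V := by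
    rw [hMdef, Finset.sum_mul, Finset.mul_sum]
    refine Finset.sum_congr rfl fun j _ => ?_
    rw [Matrix.mul_assoc]
  rw [key, hMsplit, Matrix.trace_sum, Complex.re_sum]
  refine (Finset.sum_le_sum fun j (_ : j ∈ Finset.univ) => ?_)
  calc (Matrix.trace (Uᴴ * vecMulVec (x j) (y j) * V)).re
      ≤ ‖Matrix.trace (Uᴴ * vecMulVec (x j) (y j) * V)‖ := Complex.re_le_norm _
    _ = ‖dotProduct (Uᴴ *ᵥ x j) (y j ᵥ* V)‖ := by rw [aux_trace_mul_vecMulVec_mul]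
    _ ≤ Real.sqrt (∑ i, ‖(Uᴴ *ᵥ x j) i‖^2) * Real.sqrt (∑ i, ‖(y j ᵥ* V) i‖^2) :=
        aux_norm_dot_le _ _
    _ ≤ Real.sqrt (∑ i, ‖x j i‖^2) * Real.sqrt (∑ i, ‖y j i‖^2) := by
        rw [hVy (y j)]
        exact mul_le_mul_of_nonneg_right (Real.sqrt_le_sqrt (hUx (x j))) (Real.sqrt_nonneg _)

private lemma aux_frobenius_le_traceNorm {n : Type*} [Fintype n] [DecidableEq n]
    (u : Matrix n n ℂ) :
    Real.sqrt (∑ i, ∑ j, ‖u i j‖^2) ≤ traceNorm u := by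
  have h := Matrix.posSemidef_conjTranspose_mul_self u
  set lam := h.1.eigenvalues with hlam
  have hnn : ∀ i, 0 ≤ lam i := h.eigenvalues_nonneg
  have h1 : (uᴴ * u).trace = ∑ i, (lam i : ℂ) := by
    conv_lhs => rw [h.1.spectral_theorem, Unitary.conjStarAlgAut_apply]
    rw [aux_trace_unitary_conj, Matrix.trace_diagonal]
    rfl
  have h2 : ∑ i, ∑ j, ‖u i j‖^2 = ∑ i, lam i := by
    have : ((uᴴ * u).trace).re = ∑ i, lam i := by
      rw [h1, Complex.re_sum]; simp
    rw [← this, Matrix.trace, Complex.re_sum]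
    rw [Finset.sum_comm]
    refine Finset.sum_congr rfl fun i _ => ?_
    simp only [Matrix.diag_apply, Matrix.mul_apply, Matrix.conjTranspose_apply, Complex.re_sum]
    refine Finset.sum_congr rfl fun j _ => ?_
    simp [Complex.mul_re, Complex.sq_norm, Complex.normSq_apply]
  rw [aux_traceNorm_eq_sum, h2]
  have h3 : ∑ i, lam i ≤ (∑ i, Real.sqrt (lam i))^2 := by
    have h4 : ∑ i, Real.sqrt (lam i) ^ 2 ≤ (∑ i, Real.sqrt (lam i))^2 :=
      Finset.sum_sq_le_sq_sum_of_nonneg (fun i _ => Real.sqrt_nonneg _)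
    calc ∑ i, lam i = ∑ i, Real.sqrt (lam i) ^ 2 := by
          refine Finset.sum_congr rfl fun i _ => (Real.sq_sqrt (hnn i)).symm
      _ ≤ _ := h4
  calc Real.sqrt (∑ i, lam i) ≤ Real.sqrt ((∑ i, Real.sqrt (lam i))^2) := Real.sqrt_le_sqrt h3
    _ = ∑ i, Real.sqrt (lam i) := Real.sqrt_sq (Finset.sum_nonneg fun i _ => Real.sqrt_nonneg _)

private lemma aux_realign_sum {d : ℕ} (m : ℕ) (u v : Fin m → Matrix (Fin d) (Fin d) ℂ) :
    realign (∑ j, u j ⊗ₖ v j) =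
      ∑ j, Matrix.vecMulVec (fun p : Fin d × Fin d => u j p.1 p.2)
        (fun q : Fin d × Fin d => v j q.1 q.2) := by
  ext p q
  simp [realign, Matrix.sum_apply, Matrix.kroneckerMap_apply, Matrix.vecMulVec_apply]

private lemma aux_exists_decomp {d : ℕ} (σ : Matrix (Fin d × Fin d) (Fin d × Fin d) ℂ) :
    ∃ (u v : Fin (d*d) → Matrix (Fin d) (Fin d) ℂ), σ = ∑ i, u i ⊗ₖ v i := by
  refine ⟨fun j => Matrix.single (finProdFinEquiv.symm j).1 (finProdFinEquiv.symm j).2 1,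
    fun j => Matrix.of fun k l =>
      σ ((finProdFinEquiv.symm j).1, k) ((finProdFinEquiv.symm j).2, l), ?_⟩
  ext ⟨i, k⟩ ⟨j', l⟩
  rw [Matrix.sum_apply]
  refine Eq.symm ((Fintype.sum_equiv (finProdFinEquiv (m := d) (n := d)).symm _
    (fun ab : Fin d × Fin d => (Matrix.single ab.1 ab.2 (1:ℂ)) i j' * σ (ab.1, k) (ab.2, l))
    (fun c => by simp [Matrix.kroneckerMap_apply])).trans ?_)
  rw [Fintype.sum_prod_type]
  simp [Matrix.single, ite_and, Finset.sum_ite_eq, Finset.sum_ite_eq']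

end AuxTraceNormProof

/-- The trace norm of the realignment is bounded by the greatest cross norm:
`τ(𝔄(σ)) ≤ ‖σ‖_γ`. -/
theorem tauRealign_le_gcn (d : ℕ) (σ : Matrix (Fin d × Fin d) (Fin d × Fin d) ℂ) :
    tauRealign σ ≤ gcn σ := by
  have hub : ∀ r ∈ { r : ℝ | ∃ (n : ℕ) (u : Fin n → Matrix (Fin d) (Fin d) ℂ)
      (v : Fin n → Matrix (Fin d) (Fin d) ℂ),
      σ = ∑ i, u i ⊗ₖ v i ∧ r = ∑ i, traceNorm (u i) * traceNorm (v i) },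
      tauRealign σ ≤ r := by
    rintro r ⟨m, u, v, hσ, rfl⟩
    unfold tauRealign
    rw [hσ, aux_realign_sum]
    refine (aux_traceNorm_sum_vecMulVec_le _ _).trans ?_
    refine Finset.sum_le_sum fun j _ => ?_
    have h1 : Real.sqrt (∑ p : Fin d × Fin d, ‖u j p.1 p.2‖^2) ≤ traceNorm (u j) := by
      rw [Fintype.sum_prod_type]
      exact aux_frobenius_le_traceNorm (u j)
    have h2 : Real.sqrt (∑ p : Fin d × Fin d, ‖v j p.1 p.2‖^2) ≤ traceNorm (v j) := by
      rw [Fintype.sum_prod_type]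
      exact aux_frobenius_le_traceNorm (v j)
    exact mul_le_mul h1 h2 (Real.sqrt_nonneg _) (aux_traceNorm_nonneg _)
  obtain ⟨u, v, hdec⟩ := aux_exists_decomp σ
  exact le_csInf ⟨∑ i, traceNorm (u i) * traceNorm (v i), d*d, u, v, hdec, rfl⟩ hub
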